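/- Suppose the ordered semigroup S satisfies: for all x, a, y ∈ S there exists n ∈ ℕ with x a^n y ∈ (x a^n y S y a^n x] ∩ (y a^n x S x a^n y]. Then T = Reg≤(S) is a Clifford ordered semigroup: for all a, b ∈ T there exists u ∈ T with ab ≤ b u a. -/

import Mathlib

/-- `spow a n` is the semigroup power `a^(n+1)` (exponents in a semigroup are ≥ 1). -/
def spow {S : Type*} [Semigroup S] (a : S) : ℕ → S
  | 0 => a
  | n + 1 => spow a n * a

/-- ordered-regular elements: `a ≤ a * x * a` for some `x`. -/
def RegLe (S : Type*) [Semigroup S] [PartialOrder S] : Set S :=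
  {a | ∃ x : S, a ≤ a * x * a}

/-- `I` is an ideal of the ordered semigroup `S`. -/
def IsIdeal {S : Type*} [Semigroup S] [PartialOrder S] (I : Set S) : Prop :=
  I.Nonempty ∧ (∀ s : S, ∀ a ∈ I, s * a ∈ I) ∧ (∀ a ∈ I, ∀ s : S, a * s ∈ I) ∧
    (∀ t : S, ∀ a ∈ I, t ≤ a → t ∈ I)

/-- `K` is left group like: for all `u v ∈ K` there is `x ∈ K` with `u ≤ x * v`. -/
def LeftGroupLike {S : Type*} [Semigroup S] [PartialOrder S] (K : Set S) : Prop :=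
  ∀ u ∈ K, ∀ v ∈ K, ∃ x ∈ K, u ≤ x * v

/-- `K` is group like. -/
def GroupLike' {S : Type*} [Semigroup S] [PartialOrder S] (K : Set S) : Prop :=
  ∀ u ∈ K, ∀ v ∈ K, (∃ x ∈ K, u ≤ x * v) ∧ (∃ y ∈ K, u ≤ v * y)

/-- `K` is a regular ordered subsemigroup. -/
def RegularOn {S : Type*} [Semigroup S] [PartialOrder S] (K : Set S) : Prop :=
  ∀ u ∈ K, ∃ x ∈ K, u ≤ u * x * u

/-- `K` is a Clifford ordered semigroup: regular and `uv ∈ (vKu]`. -/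
def CliffordOn {S : Type*} [Semigroup S] [PartialOrder S] (K : Set S) : Prop :=
  RegularOn K ∧ ∀ u ∈ K, ∀ v ∈ K, ∃ w ∈ K, u * v ≤ v * w * u

/-- `K` is a left Clifford ordered semigroup: regular and `uv ∈ (Ku]`. -/
def LeftCliffordOn {S : Type*} [Semigroup S] [PartialOrder S] (K : Set S) : Prop :=
  RegularOn K ∧ ∀ u ∈ K, ∀ v ∈ K, ∃ w ∈ K, u * v ≤ w * u

/-- `S` is a nil extension of the ideal `K`: every element has a power in `K`. -/
def NilExtOf {S : Type*} [Semigroup S] [PartialOrder S] (K : Set S) : Prop :=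
  IsIdeal K ∧ ∀ a : S, ∃ n : ℕ, spow a n ∈ K

variable {S : Type*} [Semigroup S] [PartialOrder S]
  [CovariantClass S S (· * ·) (· ≤ ·)]
  [CovariantClass S S (Function.swap (· * ·)) (· ≤ ·)]

/-!
Let `a ≤ a x a` and `c = x a`, so that `c ≤ c²` and `a cᵏ = (a x)ᵏ a`. The hypothesis for
`(a, c, b)` gives `p = a cⁿ b ≥ a b` with `p ≤ p s q` and `p ≤ q t p`, where `q = b cⁿ a`. Then
`a b ≤ q (t p s) q = b (cⁿ a t p s b cⁿ) a`, and the middle factor is regular as soon as `p` is.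
Regularity of `p` comes from the hypothesis for `(b, cⁿ, a)`: it gives `Q ≤ Q s' P` with
`Q = b (cⁿ)ᵏ a ≥ q` and `P = a (cⁿ)ᵏ b ≤ (a x)ⁿᵏ p`, so `p ≤ p s Q s' P ≤ p (s Q s' (a x)ⁿᵏ) p`.
-/

section Semigroup

variable {M : Type*} [Semigroup M]

lemma spow_succ' (c : M) (n : ℕ) : spow c (n + 1) = c * spow c n := by
  induction n with
  | zero => rfl
  | succ n ih =>
    show spow c (n + 1) * c = c * (spow c n * c)
    rw [ih, mul_assoc]

lemma spow_mul_mul (a b : M) (n : ℕ) : spow (a * b) n * a = a * spow (b * a) n := by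
  induction n with
  | zero => exact mul_assoc a b a
  | succ n ih => rw [spow_succ', spow_succ', mul_assoc, ih, ← mul_assoc, ← mul_assoc, mul_assoc a]

end Semigroup

section OrderedSemigroup

variable {M : Type*} [Semigroup M] [PartialOrder M]

lemma le_mul_spow_of_le_mul [MulRightMono M] {z c : M} (h : z ≤ z * c) (k : ℕ) :
    z ≤ z * spow c k := by
  induction k with
  | zero => exact h
  | succ k ih => exact h.trans <| by simpa only [spow, mul_assoc] using mul_le_mul_left ih c

lemma spow_le_spow_mul_of_le_mul_self [MulRightMono M] {c : M} (h : c ≤ c * c) (n : ℕ) :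
    spow c n ≤ spow c n * c := by
  induction n with
  | zero => exact h
  | succ n ih => exact mul_le_mul_left ih c

lemma le_spow_of_le_mul_self [MulRightMono M] {m : M} (h : m ≤ m * m) : ∀ n, m ≤ spow m n
  | 0 => le_rfl
  | n + 1 => spow_succ' m n ▸ le_mul_spow_of_le_mul h n

lemma le_spow_mul_of_le_mul_mul [MulLeftMono M] {a x : M} (h : a ≤ a * x * a) (n : ℕ) :
    a ≤ spow (a * x) n * a := by
  induction n with
  | zero => exact h
  | succ n ih =>
    rw [spow_succ', mul_assoc]
    exact h.trans (mul_le_mul_right ih (a * x))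

lemma mul_spow_le_spow_mul_mul [MulLeftMono M] [MulRightMono M] {a e m : M} (hle : a ≤ e * a)
    (hcomm : a * m = e * a) (n : ℕ) : a * spow m n ≤ spow e n * (a * m) := by
  induction n with
  | zero => exact (mul_le_mul_left hle m).trans_eq (mul_assoc e a m)
  | succ n ih => calc
    a * spow m (n + 1) = e * (a * spow m n) := by rw [spow_succ', ← mul_assoc, hcomm, mul_assoc]
    _ ≤ e * (spow e n * (a * m)) := mul_le_mul_right ih e
    _ = spow e (n + 1) * (a * m) := by rw [spow_succ', mul_assoc]

lemma exists_mem_regLe_le_mul_mul [MulLeftMono M] [MulRightMono M] {p a b m w s t : M}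
    (hreg : p ≤ p * w * p) (hright : p ≤ p * s * (b * m * a)) (hleft : p ≤ b * m * a * t * p) :
    ∃ u ∈ RegLe M, p ≤ b * u * a := by
  set Q := b * m * a
  have hv : t * p * s ≤ t * p * s * (Q * w * Q) * (t * p * s) := calc
    t * p * s ≤ t * (p * s * Q * w * (Q * t * p)) * s := by gcongr; exact hreg.trans (by gcongr)
    _ = t * p * s * (Q * w * Q) * (t * p * s) := by simp only [mul_assoc]
  refine ⟨m * a * (t * p * s) * (b * m), ⟨a * w * b, ?_⟩, ?_⟩
  · calc m * a * (t * p * s) * (b * m)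
        ≤ m * a * (t * p * s * (Q * w * Q) * (t * p * s)) * (b * m) := by gcongr
      _ = _ := by simp only [Q, mul_assoc]
  · calc p ≤ Q * t * (p * s * Q) := hleft.trans (by gcongr)
      _ = _ := by simp only [Q, mul_assoc]

end OrderedSemigroup

theorem stmt11
    (h : ∀ x a y : S, ∃ n : ℕ,
      (∃ s : S, x * spow a n * y ≤ x * spow a n * y * s * (y * spow a n * x)) ∧
      (∃ t : S, x * spow a n * y ≤ y * spow a n * x * t * (x * spow a n * y))) :
    ∀ a ∈ RegLe S, ∀ b ∈ RegLe S, ∃ u ∈ RegLe S, a * b ≤ b * u * a := by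
  rintro a ⟨x, hax⟩ b -
  have hc : x * a ≤ x * a * (x * a) := by simpa only [mul_assoc] using mul_le_mul_right hax x
  obtain ⟨n, ⟨s, hs⟩, ⟨t, ht⟩⟩ := h a (x * a) b
  set m := spow (x * a) n
  set e := spow (a * x) n
  obtain ⟨k, ⟨s', hs'⟩, -⟩ := h b m a
  have hae : a ≤ e * a := le_spow_mul_of_le_mul_mul hax n
  have hcomm : a * m = e * a := (spow_mul_mul a x n).symm
  have hmm : m ≤ m * m := le_mul_spow_of_le_mul (spow_le_spow_mul_of_le_mul_self hc n) n
  have hqQ : b * m * a ≤ b * spow m k * a := by gcongr; exact le_spow_of_le_mul_self hmm k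
  have hPp : a * spow m k * b ≤ spow e k * (a * m * b) := by
    simpa only [mul_assoc] using mul_le_mul_left (mul_spow_le_spow_mul_mul hae hcomm k) b
  have hreg :
      a * m * b ≤ a * m * b * (s * (b * spow m k * a) * s' * spow e k) * (a * m * b) := calc
    _ ≤ a * m * b * s * (b * spow m k * a) := hs.trans (mul_le_mul_right hqQ _)
    _ ≤ a * m * b * s * (b * spow m k * a * s' * (spow e k * (a * m * b))) :=
        mul_le_mul_right (hs'.trans (mul_le_mul_right hPp _)) _
    _ = _ := by simp only [mul_assoc]
  obtain ⟨u, hu, hpu⟩ := exists_mem_regLe_le_mul_mul hreg hs ht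
  have hab : a * b ≤ a * m * b := by gcongr; exact hcomm ▸ hae
  exact ⟨u, hu, hab.trans hpu⟩
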